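/- Let Ω = {ℓ, h} be a binary state space with prior p = 1/2 and n = 2 receivers, and let h : [0,1] → ℝ be a continuous non-decreasing function satisfying (i) h(x_2 − x_1) ≤ h(1 − x_1) + ((1 − x_2)/x_2)·(h(1/2) − h(x_2)) for all 0 ≤ x_1 ≤ 1/2 ≤ x_2 ≤ 1 with x_2 > 0, and (ii) h(x_2 − x_1) ≤ h(1/2) − ∑_{i∈{1,2}} (x_i/(1 − x_i))·(h(1 − x_i) − h(1/2)) for all 0 ≤ x_1 ≤ x_2 ≤ 1/2. Consider the persuasion problem with state-independent utility v^ℓ(x_1,x_2) = v^h(x_1,x_2) = h(|x_1 − x_2|) (beliefs identified with the probability of state ℓ). Then the value of this persuasion problem equals h(1/2); equivalently, ∑_{ω∈{ℓ,h}} (1/2)·∫ h(|x_1 − x_2|) dμ^ω ≤ h(1/2) for every feasible collection (μ^ℓ, μ^h), with equality attained by the full-information/no-information policy that reveals the state to receiver 2 and gives no information to receiver 1. -/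

import Mathlib

open MeasureTheory

noncomputable section

/-- In the binary-state case a belief is identified with the probability of state `ℓ`,
a number in `[0,1]`. -/
abbrev BeliefI : Type := Set.Icc (0 : ℝ) 1

/-- States: `true` is the low state `ℓ`, `false` is the high state `h`. -/
abbrev StateL : Bool := true
abbrev StateH : Bool := false

/-- The joint distribution of the state and the two receivers' beliefs, for prior
`p = p(ℓ)` and conditional belief distributions `μl` (given `ℓ`) and `μh` (given `h`). -/
def jointPBin (p : ℝ) (μl μh : Measure (Fin 2 → BeliefI)) :
    Measure (Bool × (Fin 2 → BeliefI)) :=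
  ENNReal.ofReal p • ((Measure.dirac StateL).prod μl) +
    ENNReal.ofReal (1 - p) • ((Measure.dirac StateH).prod μh)

/-- Feasibility of a pair of conditional belief distributions in the two-receiver
binary-state problem: conditionally on the information `σ(x_i)` of each receiver `i`,
the conditional probability of the state `ℓ` is `x_i` and of the state `h` is `1 - x_i`. -/
def FeasibleBin (p : ℝ) (μl μh : Measure (Fin 2 → BeliefI)) : Prop :=
  IsProbabilityMeasure μl ∧ IsProbabilityMeasure μh ∧
  ∀ i : Fin 2,
    ((fun z : Bool × (Fin 2 → BeliefI) => (z.2 i).1)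
      =ᵐ[jointPBin p μl μh]
      (jointPBin p μl μh)[Set.indicator {z : Bool × (Fin 2 → BeliefI) | z.1 = StateL}
          (fun _ => (1 : ℝ)) |
        MeasurableSpace.comap (fun z : Bool × (Fin 2 → BeliefI) => z.2 i) inferInstance]) ∧
    ((fun z : Bool × (Fin 2 → BeliefI) => 1 - (z.2 i).1)
      =ᵐ[jointPBin p μl μh]
      (jointPBin p μl μh)[Set.indicator {z : Bool × (Fin 2 → BeliefI) | z.1 = StateH}
          (fun _ => (1 : ℝ)) |
        MeasurableSpace.comap (fun z : Bool × (Fin 2 → BeliefI) => z.2 i) inferInstance])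

/-- the value of the binary-state two-receiver persuasion problem -/
def ValBin (p : ℝ) (vl vh : (Fin 2 → BeliefI) → ℝ) : ℝ :=
  sSup { r : ℝ | ∃ μl μh : Measure (Fin 2 → BeliefI), FeasibleBin p μl μh ∧
    r = p * ∫ x, vl x ∂μl + (1 - p) * ∫ x, vh x ∂μh }

end

noncomputable def gFun (h : ℝ → ℝ) (x : ℝ) : ℝ :=
  if x ≤ 1 / 2 then (h (1 - x) - h (1 / 2)) / (1 - x) else (h (1 / 2) - h x) / x

lemma gFun_neg (h : ℝ → ℝ) (x : ℝ) : gFun h (1 - x) = - gFun h x := by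
  unfold gFun
  rcases lt_trichotomy x (1 / 2) with hlt | heq | hgt
  · rw [if_neg (by linarith), if_pos (by linarith)]
    ring
  · subst heq; norm_num
  · rw [if_pos (by linarith), if_neg (by linarith)]
    rw [show (1 : ℝ) - (1 - x) = x by ring]
    ring

lemma gFun_bound (h : ℝ → ℝ) (C : ℝ) (hC : ∀ t ∈ Set.Icc (0:ℝ) 1, |h t| ≤ C) :
    ∀ x ∈ Set.Icc (0:ℝ) 1, |gFun h x| ≤ 4 * C := by
  intro x hx
  obtain ⟨hx0, hx1⟩ := hx
  have hC0 : 0 ≤ C := le_trans (abs_nonneg _) (hC 0 (by norm_num))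
  have h2 := hC (1 / 2) (by norm_num)
  unfold gFun
  split_ifs with hcond
  · have h1 := hC (1 - x) ⟨by linarith, by linarith⟩
    rw [abs_div, abs_of_nonneg (by linarith : (0:ℝ) ≤ 1 - x), div_le_iff₀ (by linarith)]
    have hd : |h (1 - x) - h (1 / 2)| ≤ |h (1 - x)| + |h (1 / 2)| := abs_sub _ _
    nlinarith
  · push_neg at hcond
    have h1 := hC x ⟨hx0, hx1⟩
    rw [abs_div, abs_of_nonneg (by linarith : (0:ℝ) ≤ x), div_le_iff₀ (by linarith)]
    have hd : |h (1 / 2) - h x| ≤ |h (1 / 2)| + |h x| := abs_sub _ _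
    nlinarith

section core
variable {h : ℝ → ℝ}

lemma core_le
    (hmono : MonotoneOn h (Set.Icc (0 : ℝ) 1))
    (hineq1 : ∀ x1 x2 : ℝ, 0 ≤ x1 → x1 ≤ 1 / 2 → 1 / 2 ≤ x2 → x2 ≤ 1 → 0 < x2 →
      h (x2 - x1) ≤ h (1 - x1) + (1 - x2) / x2 * (h (1 / 2) - h x2))
    (hineq2 : ∀ x1 x2 : ℝ, 0 ≤ x1 → x1 ≤ x2 → x2 ≤ 1 / 2 →
      h (x2 - x1) ≤ h (1 / 2) -
        (x1 / (1 - x1) * (h (1 - x1) - h (1 / 2)) + x2 / (1 - x2) * (h (1 - x2) - h (1 / 2))))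
    {x1 x2 : ℝ} (h0 : 0 ≤ x1) (h12 : x1 ≤ x2) (h1 : x2 ≤ 1) :
    h (x2 - x1) ≤ h (1 / 2) + gFun h x1 * (1 - x1) + gFun h x2 * (1 - x2) := by
  rcases le_or_gt x2 (1 / 2) with hc2 | hc2
  · -- both below 1/2
    unfold gFun
    rw [if_pos (by linarith), if_pos (by linarith)]
    rw [div_mul_cancel₀ _ (by linarith : (1:ℝ) - x1 ≠ 0),
      div_mul_cancel₀ _ (by linarith : (1:ℝ) - x2 ≠ 0)]
    have hA : h (x2 - x1) ≤ h (1 - x2) :=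
      hmono ⟨by linarith, by linarith⟩ ⟨by linarith, by linarith⟩ (by linarith)
    have hB : h (1 / 2) ≤ h (1 - x1) :=
      hmono (by norm_num) ⟨by linarith, by linarith⟩ (by linarith)
    linarith
  · rcases le_or_gt x1 (1 / 2) with hc1 | hc1
    · -- x1 ≤ 1/2 < x2
      unfold gFun
      rw [if_pos hc1, if_neg (by linarith)]
      rw [div_mul_cancel₀ _ (by linarith : (1:ℝ) - x1 ≠ 0)]
      have key := hineq1 x1 x2 h0 hc1 (le_of_lt hc2) h1 (by linarith)
      have e : (h (1 / 2) - h x2) / x2 * (1 - x2) = (1 - x2) / x2 * (h (1 / 2) - h x2) := by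
        ring
      linarith
    · -- 1/2 < x1 ≤ x2
      unfold gFun
      rw [if_neg (by linarith), if_neg (by linarith)]
      have key := hineq2 (1 - x2) (1 - x1) (by linarith) (by linarith) (by linarith)
      rw [show (1:ℝ) - x1 - (1 - x2) = x2 - x1 by ring,
        show (1:ℝ) - (1 - x2) = x2 by ring, show (1:ℝ) - (1 - x1) = x1 by ring] at key
      have e : h (1 / 2) -
          ((1 - x2) / x2 * (h x2 - h (1 / 2)) + (1 - x1) / x1 * (h x1 - h (1 / 2)))
          = h (1 / 2) + (h (1 / 2) - h x1) / x1 * (1 - x1)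
            + (h (1 / 2) - h x2) / x2 * (1 - x2) := by ring
      linarith

lemma core_abs
    (hmono : MonotoneOn h (Set.Icc (0 : ℝ) 1))
    (hineq1 : ∀ x1 x2 : ℝ, 0 ≤ x1 → x1 ≤ 1 / 2 → 1 / 2 ≤ x2 → x2 ≤ 1 → 0 < x2 →
      h (x2 - x1) ≤ h (1 - x1) + (1 - x2) / x2 * (h (1 / 2) - h x2))
    (hineq2 : ∀ x1 x2 : ℝ, 0 ≤ x1 → x1 ≤ x2 → x2 ≤ 1 / 2 →
      h (x2 - x1) ≤ h (1 / 2) -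
        (x1 / (1 - x1) * (h (1 - x1) - h (1 / 2)) + x2 / (1 - x2) * (h (1 - x2) - h (1 / 2))))
    {x1 x2 : ℝ} (hx1 : x1 ∈ Set.Icc (0:ℝ) 1) (hx2 : x2 ∈ Set.Icc (0:ℝ) 1) :
    h |x1 - x2| ≤ h (1 / 2) + gFun h x1 * (1 - x1) + gFun h x2 * (1 - x2) := by
  obtain ⟨ha, hb⟩ := hx1; obtain ⟨hc, hd⟩ := hx2
  rcases le_total x1 x2 with hle | hle
  · rw [abs_sub_comm, abs_of_nonneg (by linarith)]
    exact core_le hmono hineq1 hineq2 ha hle hd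
  · rw [abs_of_nonneg (by linarith)]
    have := core_le hmono hineq1 hineq2 hc hle hb
    linarith

lemma core_ind
    (hmono : MonotoneOn h (Set.Icc (0 : ℝ) 1))
    (hineq1 : ∀ x1 x2 : ℝ, 0 ≤ x1 → x1 ≤ 1 / 2 → 1 / 2 ≤ x2 → x2 ≤ 1 → 0 < x2 →
      h (x2 - x1) ≤ h (1 - x1) + (1 - x2) / x2 * (h (1 / 2) - h x2))
    (hineq2 : ∀ x1 x2 : ℝ, 0 ≤ x1 → x1 ≤ x2 → x2 ≤ 1 / 2 →
      h (x2 - x1) ≤ h (1 / 2) -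
        (x1 / (1 - x1) * (h (1 - x1) - h (1 / 2)) + x2 / (1 - x2) * (h (1 - x2) - h (1 / 2))))
    {x1 x2 : ℝ} (hx1 : x1 ∈ Set.Icc (0:ℝ) 1) (hx2 : x2 ∈ Set.Icc (0:ℝ) 1)
    {e : ℝ} (he : e = 1 ∨ e = 0) :
    h |x1 - x2| ≤ h (1 / 2) + gFun h x1 * (e - x1) + gFun h x2 * (e - x2) := by
  rcases he with rfl | rfl
  · exact core_abs hmono hineq1 hineq2 hx1 hx2
  · obtain ⟨ha, hb⟩ := hx1; obtain ⟨hc, hd⟩ := hx2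
    have key := core_abs hmono hineq1 hineq2
      (x1 := 1 - x1) (x2 := 1 - x2) ⟨by linarith, by linarith⟩ ⟨by linarith, by linarith⟩
    rw [gFun_neg, gFun_neg] at key
    rw [show |1 - x1 - (1 - x2)| = |x1 - x2| by rw [show (1:ℝ) - x1 - (1-x2) = -(x1 - x2) by ring, abs_neg]] at key
    ring_nf at key ⊢
    linarith

section MeasAux

variable {h : ℝ → ℝ}

lemma continuous_h_comp {α : Type*} [TopologicalSpace α]
    (hcont : ContinuousOn h (Set.Icc (0 : ℝ) 1)) {f : α → ℝ} (hf : Continuous f)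
    (hmem : ∀ a, f a ∈ Set.Icc (0 : ℝ) 1) :
    Continuous fun a => h (f a) :=
  hcont.restrict.comp (hf.subtype_mk hmem)

lemma measurable_gFun_sub (hcont : ContinuousOn h (Set.Icc (0 : ℝ) 1)) :
    Measurable fun t : BeliefI => gFun h t.1 := by
  have c1 : Continuous fun t : BeliefI => h (1 - t.1) :=
    continuous_h_comp hcont (continuous_const.sub continuous_subtype_val)
      (fun t => ⟨by linarith [t.2.2], by linarith [t.2.1]⟩)
  have c2 : Continuous fun t : BeliefI => h t.1 :=
    continuous_h_comp hcont continuous_subtype_val (fun t => t.2)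
  unfold gFun
  refine Measurable.ite ?_ ?_ ?_
  · exact measurableSet_le continuous_subtype_val.measurable measurable_const
  · exact (c1.measurable.sub measurable_const).div
      (continuous_const.sub continuous_subtype_val).measurable
  · exact (measurable_const.sub c2.measurable).div continuous_subtype_val.measurable

lemma continuous_phi (hcont : ContinuousOn h (Set.Icc (0 : ℝ) 1)) :
    Continuous fun x : Fin 2 → BeliefI => h |(x 0).1 - (x 1).1| := by
  refine continuous_h_comp hcont ?_ ?_
  · exact ((continuous_subtype_val.comp (continuous_apply 0)).sub
      (continuous_subtype_val.comp (continuous_apply 1))).abs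
  · intro x
    refine ⟨abs_nonneg _, abs_le.2 ⟨?_, ?_⟩⟩
    · have := (x 0).2.1; have := (x 1).2.2; linarith
    · have := (x 0).2.2; have := (x 1).2.1; linarith

lemma integrable_of_bdd {α : Type*} [MeasurableSpace α] {μ : Measure α} [IsFiniteMeasure μ]
    {f : α → ℝ} {C : ℝ} (hf : AEStronglyMeasurable f μ) (hb : ∀ z, |f z| ≤ C) :
    Integrable f μ :=
  ⟨hf, HasFiniteIntegral.of_bounded (C := C)
    (Filter.Eventually.of_forall fun z => by simpa [Real.norm_eq_abs] using hb z)⟩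

lemma jointPBin_half_prob (μl μh : Measure (Fin 2 → BeliefI))
    [IsProbabilityMeasure μl] [IsProbabilityMeasure μh] :
    IsProbabilityMeasure (jointPBin (1 / 2) μl μh) := by
  constructor
  unfold jointPBin
  rw [Measure.add_apply, Measure.smul_apply, Measure.smul_apply, measure_univ, measure_univ,
    smul_eq_mul, smul_eq_mul, mul_one, mul_one,
    ← ENNReal.ofReal_add (by norm_num) (by norm_num)]
  norm_num

lemma integral_jointPBin_half (μl μh : Measure (Fin 2 → BeliefI))
    [IsProbabilityMeasure μl] [IsProbabilityMeasure μh]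
    {f : Bool × (Fin 2 → BeliefI) → ℝ} (hf : Measurable f) {C : ℝ} (hb : ∀ z, |f z| ≤ C) :
    ∫ z, f z ∂(jointPBin (1 / 2) μl μh)
      = (1 / 2) * ∫ x, f (StateL, x) ∂μl + (1 / 2) * ∫ x, f (StateH, x) ∂μh := by
  haveI h1 : IsProbabilityMeasure (μl.map (Prod.mk StateL)) :=
    Measure.isProbabilityMeasure_map measurable_prodMk_left.aemeasurable
  haveI h2 : IsProbabilityMeasure (μh.map (Prod.mk StateH)) :=
    Measure.isProbabilityMeasure_map measurable_prodMk_left.aemeasurable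
  have il : Integrable f (μl.map (Prod.mk StateL)) := integrable_of_bdd hf.aestronglyMeasurable hb
  have ih : Integrable f (μh.map (Prod.mk StateH)) := integrable_of_bdd hf.aestronglyMeasurable hb
  unfold jointPBin
  rw [Measure.dirac_prod, Measure.dirac_prod,
    integral_add_measure (il.smul_measure ENNReal.ofReal_ne_top)
      (ih.smul_measure ENNReal.ofReal_ne_top),
    integral_smul_measure, integral_smul_measure,
    integral_map measurable_prodMk_left.aemeasurable hf.aestronglyMeasurable,
    integral_map measurable_prodMk_left.aemeasurable hf.aestronglyMeasurable,
    ENNReal.toReal_ofReal (by norm_num : (0:ℝ) ≤ 1 / 2),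
    ENNReal.toReal_ofReal (by norm_num : (0:ℝ) ≤ 1 - 1 / 2)]
  norm_num

lemma habs_mem (x : Fin 2 → BeliefI) : |(x 0).1 - (x 1).1| ∈ Set.Icc (0 : ℝ) 1 := by
  refine ⟨abs_nonneg _, abs_le.2 ⟨?_, ?_⟩⟩
  · have := (x 0).2.1; have := (x 1).2.2; linarith
  · have := (x 0).2.2; have := (x 1).2.1; linarith

end MeasAux

set_option maxHeartbeats 1000000 in
/-- sufficient conditions for the optimality of the
full-information/no-information policy for objectives `h(|x₁ - x₂|)`
(Proposition `prop_sufficient_full_info_no_info_h`), at the prior `p = 1/2`. -/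
theorem full_info_no_info_optimal
    (h : ℝ → ℝ)
    (hcont : ContinuousOn h (Set.Icc (0 : ℝ) 1))
    (hmono : MonotoneOn h (Set.Icc (0 : ℝ) 1))
    (hineq1 : ∀ x1 x2 : ℝ, 0 ≤ x1 → x1 ≤ 1 / 2 → 1 / 2 ≤ x2 → x2 ≤ 1 → 0 < x2 →
      h (x2 - x1) ≤ h (1 - x1) + (1 - x2) / x2 * (h (1 / 2) - h x2))
    (hineq2 : ∀ x1 x2 : ℝ, 0 ≤ x1 → x1 ≤ x2 → x2 ≤ 1 / 2 →
      h (x2 - x1) ≤ h (1 / 2) -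
        (x1 / (1 - x1) * (h (1 - x1) - h (1 / 2)) + x2 / (1 - x2) * (h (1 - x2) - h (1 / 2)))) :
    (∀ μl μh : Measure (Fin 2 → BeliefI), FeasibleBin (1 / 2) μl μh →
      (1 / 2) * (∫ x, h |(x 0).1 - (x 1).1| ∂μl) +
        (1 / 2) * (∫ x, h |(x 0).1 - (x 1).1| ∂μh) ≤ h (1 / 2)) ∧
    -- the bound is attained by revealing the state to receiver 2 (index 1) and giving
    -- no information to receiver 1 (index 0):
    (FeasibleBin (1 / 2)
        (Measure.dirac (fun i : Fin 2 =>
          if i = 0 then (⟨1 / 2, by norm_num⟩ : BeliefI) else ⟨1, by norm_num⟩))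
        (Measure.dirac (fun i : Fin 2 =>
          if i = 0 then (⟨1 / 2, by norm_num⟩ : BeliefI) else ⟨0, by norm_num⟩)) ∧
      (1 / 2) * (∫ x, h |(x 0).1 - (x 1).1|
          ∂(Measure.dirac (fun i : Fin 2 =>
            if i = 0 then (⟨1 / 2, by norm_num⟩ : BeliefI) else ⟨1, by norm_num⟩))) +
        (1 / 2) * (∫ x, h |(x 0).1 - (x 1).1|
          ∂(Measure.dirac (fun i : Fin 2 =>
            if i = 0 then (⟨1 / 2, by norm_num⟩ : BeliefI) else ⟨0, by norm_num⟩)))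
        = h (1 / 2)) := by
  classical
  obtain ⟨C0, hC0⟩ := isCompact_Icc.exists_bound_of_continuousOn hcont
  set C : ℝ := |C0| + 1 with hCdef
  have hC : ∀ t ∈ Set.Icc (0 : ℝ) 1, |h t| ≤ C := by
    intro t ht
    have h1 := hC0 t ht
    rw [Real.norm_eq_abs] at h1
    have h2 := le_abs_self C0
    simp only [hCdef]; linarith
  have hCpos : (0 : ℝ) < C := by positivity
  constructor
  · -- upper bound
    intro μl μh hfeas
    obtain ⟨hμl, hμh, hcond⟩ := hfeas
    haveI := hμl; haveI := hμh
    haveI hPprob : IsProbabilityMeasure (jointPBin (1 / 2) μl μh) := jointPBin_half_prob μl μh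
    set P := jointPBin (1 / 2) μl μh with hPdef
    set ind : Bool × (Fin 2 → BeliefI) → ℝ :=
      Set.indicator {z : Bool × (Fin 2 → BeliefI) | z.1 = StateL} (fun _ => (1 : ℝ)) with hind
    have hind_val : ∀ z, ind z = if z.1 = true then 1 else 0 := fun z => by
      by_cases hz : z.1 = true <;> simp [hind, Set.indicator_apply, hz, StateL]
    have hind_meas : Measurable ind := by
      apply Measurable.indicator measurable_const
      exact measurable_fst (measurableSet_singleton StateL)
    have hxmeas : ∀ i : Fin 2, Measurable fun z : Bool × (Fin 2 → BeliefI) => (z.2 i).1 :=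
      fun i => measurable_subtype_coe.comp ((measurable_pi_apply i).comp measurable_snd)
    have hgmeas : ∀ i : Fin 2, Measurable fun z : Bool × (Fin 2 → BeliefI) => gFun h ((z.2 i).1) :=
      fun i => (measurable_gFun_sub hcont).comp ((measurable_pi_apply i).comp measurable_snd)
    have hgbd : ∀ (i : Fin 2) (z : Bool × (Fin 2 → BeliefI)), |gFun h ((z.2 i).1)| ≤ 4 * C :=
      fun i z => gFun_bound h C hC _ (z.2 i).2
    have hindbd : ∀ z, |ind z| ≤ 1 := fun z => by rw [hind_val]; split_ifs <;> norm_num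
    have hxbd : ∀ (i : Fin 2) (z : Bool × (Fin 2 → BeliefI)), |(z.2 i).1| ≤ 1 := fun i z => by
      rw [abs_of_nonneg (z.2 i).2.1]; exact (z.2 i).2.2
    have hgind_int : ∀ i : Fin 2,
        Integrable ((fun z : Bool × (Fin 2 → BeliefI) => gFun h ((z.2 i).1)) * ind) P := by
      intro i
      apply integrable_of_bdd (C := 4 * C * 1) ((hgmeas i).mul hind_meas).aestronglyMeasurable
      intro z
      rw [Pi.mul_apply, abs_mul]
      exact mul_le_mul (hgbd i z) (hindbd z) (abs_nonneg _) (by positivity)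
    have hgx_int : ∀ i : Fin 2,
        Integrable (fun z : Bool × (Fin 2 → BeliefI) => gFun h ((z.2 i).1) * ((z.2 i).1)) P := by
      intro i
      apply integrable_of_bdd (C := 4 * C * 1) ((hgmeas i).mul (hxmeas i)).aestronglyMeasurable
      intro z
      rw [Pi.mul_apply, abs_mul]
      exact mul_le_mul (hgbd i z) (hxbd i z) (abs_nonneg _) (by positivity)
    have hindint : Integrable ind P := integrable_of_bdd hind_meas.aestronglyMeasurable hindbd
    have hkey : ∀ i : Fin 2,
        ∫ z, gFun h ((z.2 i).1) * ind z ∂P = ∫ z, gFun h ((z.2 i).1) * ((z.2 i).1) ∂P := by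
      intro i
      have hm : MeasurableSpace.comap (fun z : Bool × (Fin 2 → BeliefI) => z.2 i) inferInstance
          ≤ (inferInstance : MeasurableSpace (Bool × (Fin 2 → BeliefI))) :=
        ((measurable_pi_apply i).comp measurable_snd).comap_le
      haveI : SigmaFinite (P.trim hm) := by
        haveI : IsFiniteMeasure (P.trim hm) := isFiniteMeasure_trim hm
        infer_instance
      have hfe := (hcond i).1
      have hprojm : Measurable[MeasurableSpace.comap
            (fun z : Bool × (Fin 2 → BeliefI) => z.2 i) inferInstance]
          (fun z : Bool × (Fin 2 → BeliefI) => z.2 i) := Measurable.of_comap_le le_rfl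
      have hgm : StronglyMeasurable[MeasurableSpace.comap
            (fun z : Bool × (Fin 2 → BeliefI) => z.2 i) inferInstance]
          (fun z : Bool × (Fin 2 → BeliefI) => gFun h ((z.2 i).1)) :=
        ((measurable_gFun_sub hcont).comp hprojm).stronglyMeasurable
      have h2 := condExp_mul_of_stronglyMeasurable_left hgm (hgind_int i) hindint
      calc ∫ z, gFun h ((z.2 i).1) * ind z ∂P
          = ∫ z, ((fun z : Bool × (Fin 2 → BeliefI) => gFun h ((z.2 i).1)) * ind) z ∂P := rfl
        _ = ∫ z, (P[(fun z : Bool × (Fin 2 → BeliefI) => gFun h ((z.2 i).1)) * ind |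
              MeasurableSpace.comap (fun z : Bool × (Fin 2 → BeliefI) => z.2 i) inferInstance]) z
              ∂P := (integral_condExp hm).symm
        _ = ∫ z, gFun h ((z.2 i).1) * ((z.2 i).1) ∂P := by
            apply integral_congr_ae
            filter_upwards [h2, hfe] with z hz1 hz2
            rw [hz1, Pi.mul_apply, ← hz2]
    have hpt : ∀ z : Bool × (Fin 2 → BeliefI),
        h |(z.2 0).1 - (z.2 1).1| ≤ h (1 / 2) + (gFun h ((z.2 0).1) * (ind z - (z.2 0).1)
          + gFun h ((z.2 1).1) * (ind z - (z.2 1).1)) := by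
      intro z
      have he : ind z = 1 ∨ ind z = 0 := by rw [hind_val]; split_ifs <;> simp
      have := core_ind hmono hineq1 hineq2 (z.2 0).2 (z.2 1).2 he
      linarith
    have hΦmeas : Measurable fun z : Bool × (Fin 2 → BeliefI) => h |(z.2 0).1 - (z.2 1).1| :=
      ((continuous_phi hcont).comp continuous_snd).measurable
    have hΦbd : ∀ z : Bool × (Fin 2 → BeliefI), |h (|(z.2 0).1 - (z.2 1).1|)| ≤ C :=
      fun z => hC _ (habs_mem z.2)
    have hΦint : Integrable (fun z : Bool × (Fin 2 → BeliefI) => h |(z.2 0).1 - (z.2 1).1|) P :=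
      integrable_of_bdd hΦmeas.aestronglyMeasurable hΦbd
    have hterm : ∀ i : Fin 2,
        Integrable (fun z : Bool × (Fin 2 → BeliefI) =>
          gFun h ((z.2 i).1) * (ind z - (z.2 i).1)) P := by
      intro i
      apply integrable_of_bdd (C := 4 * C * 2)
        ((hgmeas i).mul (hind_meas.sub (hxmeas i))).aestronglyMeasurable
      intro z
      rw [Pi.mul_apply, abs_mul]
      apply mul_le_mul (hgbd i z) ?_ (abs_nonneg _) (by positivity)
      calc |ind z - (z.2 i).1| ≤ |ind z| + |(z.2 i).1| := abs_sub _ _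
        _ ≤ 2 := by linarith [hindbd z, hxbd i z]
    have hRHSint : Integrable (fun z : Bool × (Fin 2 → BeliefI) =>
        h (1 / 2) + (gFun h ((z.2 0).1) * (ind z - (z.2 0).1)
          + gFun h ((z.2 1).1) * (ind z - (z.2 1).1))) P :=
      (integrable_const _).add ((hterm 0).add (hterm 1))
    have hle : ∫ z, h |(z.2 0).1 - (z.2 1).1| ∂P
        ≤ ∫ z, (h (1 / 2) + (gFun h ((z.2 0).1) * (ind z - (z.2 0).1)
          + gFun h ((z.2 1).1) * (ind z - (z.2 1).1))) ∂P :=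
      integral_mono hΦint hRHSint hpt
    have hzero : ∀ i : Fin 2,
        ∫ z, gFun h ((z.2 i).1) * (ind z - (z.2 i).1) ∂P = 0 := by
      intro i
      have heq : (fun z : Bool × (Fin 2 → BeliefI) => gFun h ((z.2 i).1) * (ind z - (z.2 i).1))
          = fun z => ((fun z : Bool × (Fin 2 → BeliefI) => gFun h ((z.2 i).1)) * ind) z
            - gFun h ((z.2 i).1) * ((z.2 i).1) := by
        funext z; simp only [Pi.mul_apply]; ring
      rw [heq, integral_sub (hgind_int i) (hgx_int i)]
      have := hkey i
      simp only [Pi.mul_apply] at this ⊢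
      rw [this, sub_self]
    have hRHSval : ∫ z, (h (1 / 2) + (gFun h ((z.2 0).1) * (ind z - (z.2 0).1)
        + gFun h ((z.2 1).1) * (ind z - (z.2 1).1))) ∂P = h (1 / 2) := by
      have hsum_int : Integrable (fun z : Bool × (Fin 2 → BeliefI) =>
          gFun h ((z.2 0).1) * (ind z - (z.2 0).1)
            + gFun h ((z.2 1).1) * (ind z - (z.2 1).1)) P := (hterm 0).add (hterm 1)
      rw [integral_add (integrable_const _) hsum_int,
        integral_add (hterm 0) (hterm 1), hzero 0, hzero 1, integral_const]
      simp
    have hdec : ∫ z, h |(z.2 0).1 - (z.2 1).1| ∂P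
        = 1 / 2 * ∫ x, h |(x 0).1 - (x 1).1| ∂μl
          + 1 / 2 * ∫ x, h |(x 0).1 - (x 1).1| ∂μh := by
      exact integral_jointPBin_half μl μh hΦmeas hΦbd
    rw [← hdec]
    rw [hRHSval] at hle
    exact hle
  · -- attainment
    have hset : ∀ f : Bool × (Fin 2 → BeliefI) → ℝ, StronglyMeasurable f →
        (∀ z, |f z| ≤ 1) →
        ∀ (a b : Fin 2 → BeliefI) (s : Set (Bool × (Fin 2 → BeliefI))), MeasurableSet s →
        ∫ z in s, f z ∂(jointPBin (1 / 2) (Measure.dirac a) (Measure.dirac b))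
          = 1 / 2 * (if (StateL, a) ∈ s then f (StateL, a) else 0)
            + 1 / 2 * (if (StateH, b) ∈ s then f (StateH, b) else 0) := by
      intro f hf hbd a b s hs
      have hP2 : jointPBin (1 / 2) (Measure.dirac a) (Measure.dirac b)
          = ENNReal.ofReal (1 / 2) • Measure.dirac (StateL, a)
            + ENNReal.ofReal (1 / 2) • Measure.dirac (StateH, b) := by
        unfold jointPBin
        rw [Measure.dirac_prod, Measure.dirac_prod, Measure.map_dirac' measurable_prodMk_left,
          Measure.map_dirac' measurable_prodMk_left]
        norm_num
      have i1 : Integrable f (Measure.dirac (StateL, a)) :=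
        integrable_of_bdd hf.aestronglyMeasurable hbd
      have i2 : Integrable f (Measure.dirac (StateH, b)) :=
        integrable_of_bdd hf.aestronglyMeasurable hbd
      rw [hP2, Measure.restrict_add, Measure.restrict_smul, Measure.restrict_smul,
        integral_add_measure ((i1.restrict (s := s)).smul_measure ENNReal.ofReal_ne_top)
          ((i2.restrict (s := s)).smul_measure ENNReal.ofReal_ne_top),
        integral_smul_measure, integral_smul_measure,
        setIntegral_dirac' hf _ hs, setIntegral_dirac' hf _ hs,
        ENNReal.toReal_ofReal (by norm_num : (0:ℝ) ≤ 1 / 2), smul_eq_mul, smul_eq_mul]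
    have hindLmeas : StronglyMeasurable (Set.indicator
        {z : Bool × (Fin 2 → BeliefI) | z.1 = StateL} (fun _ => (1 : ℝ))) :=
      (measurable_const.indicator
        (measurable_fst (measurableSet_singleton StateL))).stronglyMeasurable
    have hindHmeas : StronglyMeasurable (Set.indicator
        {z : Bool × (Fin 2 → BeliefI) | z.1 = StateH} (fun _ => (1 : ℝ))) :=
      (measurable_const.indicator
        (measurable_fst (measurableSet_singleton StateH))).stronglyMeasurable
    have hindLbd : ∀ z, |Set.indicator {z : Bool × (Fin 2 → BeliefI) | z.1 = StateL}
        (fun _ => (1 : ℝ)) z| ≤ 1 := fun z => by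
      rw [Set.indicator_apply]; split_ifs <;> norm_num
    have hindHbd : ∀ z, |Set.indicator {z : Bool × (Fin 2 → BeliefI) | z.1 = StateH}
        (fun _ => (1 : ℝ)) z| ≤ 1 := fun z => by
      rw [Set.indicator_apply]; split_ifs <;> norm_num
    have hxmeas : ∀ i : Fin 2, Measurable fun z : Bool × (Fin 2 → BeliefI) => (z.2 i).1 :=
      fun i => measurable_subtype_coe.comp ((measurable_pi_apply i).comp measurable_snd)
    have hxbd : ∀ (i : Fin 2) (z : Bool × (Fin 2 → BeliefI)), |(z.2 i).1| ≤ 1 := fun i z => by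
      rw [abs_of_nonneg (z.2 i).2.1]; exact (z.2 i).2.2
    have hxbd' : ∀ (i : Fin 2) (z : Bool × (Fin 2 → BeliefI)), |1 - (z.2 i).1| ≤ 1 := fun i z => by
      rw [abs_of_nonneg (by linarith [(z.2 i).2.2] : (0:ℝ) ≤ 1 - (z.2 i).1)]
      linarith [(z.2 i).2.1]
    constructor
    · -- feasibility
      refine ⟨inferInstance, inferInstance, fun i => ⟨?_, ?_⟩⟩
      · -- state ℓ condition
        have hm : MeasurableSpace.comap (fun z : Bool × (Fin 2 → BeliefI) => z.2 i) inferInstance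
            ≤ (inferInstance : MeasurableSpace (Bool × (Fin 2 → BeliefI))) :=
          ((measurable_pi_apply i).comp measurable_snd).comap_le
        haveI : SigmaFinite ((jointPBin (1 / 2)
            (Measure.dirac (fun i : Fin 2 =>
              if i = 0 then (⟨1 / 2, by norm_num⟩ : BeliefI) else ⟨1, by norm_num⟩))
            (Measure.dirac (fun i : Fin 2 =>
              if i = 0 then (⟨1 / 2, by norm_num⟩ : BeliefI) else ⟨0, by norm_num⟩))).trim hm) := by
          haveI : IsProbabilityMeasure (jointPBin (1 / 2)
              (Measure.dirac (fun i : Fin 2 =>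
                if i = 0 then (⟨1 / 2, by norm_num⟩ : BeliefI) else ⟨1, by norm_num⟩))
              (Measure.dirac (fun i : Fin 2 =>
                if i = 0 then (⟨1 / 2, by norm_num⟩ : BeliefI) else ⟨0, by norm_num⟩))) :=
            jointPBin_half_prob _ _
          haveI := isFiniteMeasure_trim (μ := (jointPBin (1 / 2)
              (Measure.dirac (fun i : Fin 2 =>
                if i = 0 then (⟨1 / 2, by norm_num⟩ : BeliefI) else ⟨1, by norm_num⟩))
              (Measure.dirac (fun i : Fin 2 =>
                if i = 0 then (⟨1 / 2, by norm_num⟩ : BeliefI) else ⟨0, by norm_num⟩)))) hm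
          infer_instance
        have hprojm : Measurable[MeasurableSpace.comap
              (fun z : Bool × (Fin 2 → BeliefI) => z.2 i) inferInstance]
            (fun z : Bool × (Fin 2 → BeliefI) => z.2 i) := Measurable.of_comap_le le_rfl
        have hxm : Measurable fun z : Bool × (Fin 2 → BeliefI) => (z.2 i).1 :=
          measurable_subtype_coe.comp ((measurable_pi_apply i).comp measurable_snd)
        refine ae_eq_condExp_of_forall_setIntegral_eq hm ?_ (fun s _ _ => ?_) (fun s hs _ => ?_) ?_
        · haveI : IsProbabilityMeasure (jointPBin (1 / 2)
              (Measure.dirac (fun i : Fin 2 =>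
                if i = 0 then (⟨1 / 2, by norm_num⟩ : BeliefI) else ⟨1, by norm_num⟩))
              (Measure.dirac (fun i : Fin 2 =>
                if i = 0 then (⟨1 / 2, by norm_num⟩ : BeliefI) else ⟨0, by norm_num⟩))) :=
            jointPBin_half_prob _ _
          exact integrable_of_bdd hindLmeas.measurable.aestronglyMeasurable hindLbd
        · haveI : IsProbabilityMeasure (jointPBin (1 / 2)
              (Measure.dirac (fun i : Fin 2 =>
                if i = 0 then (⟨1 / 2, by norm_num⟩ : BeliefI) else ⟨1, by norm_num⟩))
              (Measure.dirac (fun i : Fin 2 =>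
                if i = 0 then (⟨1 / 2, by norm_num⟩ : BeliefI) else ⟨0, by norm_num⟩))) :=
            jointPBin_half_prob _ _
          exact (integrable_of_bdd hxm.aestronglyMeasurable (hxbd i)).integrableOn
        · obtain ⟨B, hB, rfl⟩ := hs
          rw [hset _ hxm.stronglyMeasurable (hxbd i) _ _ _ (hm _ ⟨B, hB, rfl⟩),
            hset _ hindLmeas (hindLbd) _ _ _ (hm _ ⟨B, hB, rfl⟩)]
          fin_cases i <;>
            simp only [Set.mem_preimage, Set.indicator_apply, Set.mem_setOf_eq] <;>
            norm_num [StateL, StateH] <;>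
            split_ifs <;>
            first
              | rfl
              | norm_num
              | (exfalso; solve_by_elim)
        · exact (measurable_subtype_coe.comp hprojm).stronglyMeasurable.aestronglyMeasurable
      · -- state h condition
        have hm : MeasurableSpace.comap (fun z : Bool × (Fin 2 → BeliefI) => z.2 i) inferInstance
            ≤ (inferInstance : MeasurableSpace (Bool × (Fin 2 → BeliefI))) :=
          ((measurable_pi_apply i).comp measurable_snd).comap_le
        haveI : SigmaFinite ((jointPBin (1 / 2)
            (Measure.dirac (fun i : Fin 2 =>
              if i = 0 then (⟨1 / 2, by norm_num⟩ : BeliefI) else ⟨1, by norm_num⟩))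
            (Measure.dirac (fun i : Fin 2 =>
              if i = 0 then (⟨1 / 2, by norm_num⟩ : BeliefI) else ⟨0, by norm_num⟩))).trim hm) := by
          haveI : IsProbabilityMeasure (jointPBin (1 / 2)
              (Measure.dirac (fun i : Fin 2 =>
                if i = 0 then (⟨1 / 2, by norm_num⟩ : BeliefI) else ⟨1, by norm_num⟩))
              (Measure.dirac (fun i : Fin 2 =>
                if i = 0 then (⟨1 / 2, by norm_num⟩ : BeliefI) else ⟨0, by norm_num⟩))) :=
            jointPBin_half_prob _ _
          haveI := isFiniteMeasure_trim (μ := (jointPBin (1 / 2)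
              (Measure.dirac (fun i : Fin 2 =>
                if i = 0 then (⟨1 / 2, by norm_num⟩ : BeliefI) else ⟨1, by norm_num⟩))
              (Measure.dirac (fun i : Fin 2 =>
                if i = 0 then (⟨1 / 2, by norm_num⟩ : BeliefI) else ⟨0, by norm_num⟩)))) hm
          infer_instance
        have hprojm : Measurable[MeasurableSpace.comap
              (fun z : Bool × (Fin 2 → BeliefI) => z.2 i) inferInstance]
            (fun z : Bool × (Fin 2 → BeliefI) => z.2 i) := Measurable.of_comap_le le_rfl
        have hxm : Measurable fun z : Bool × (Fin 2 → BeliefI) => 1 - (z.2 i).1 :=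
          measurable_const.sub
            (measurable_subtype_coe.comp ((measurable_pi_apply i).comp measurable_snd))
        refine ae_eq_condExp_of_forall_setIntegral_eq hm ?_ (fun s _ _ => ?_) (fun s hs _ => ?_) ?_
        · haveI : IsProbabilityMeasure (jointPBin (1 / 2)
              (Measure.dirac (fun i : Fin 2 =>
                if i = 0 then (⟨1 / 2, by norm_num⟩ : BeliefI) else ⟨1, by norm_num⟩))
              (Measure.dirac (fun i : Fin 2 =>
                if i = 0 then (⟨1 / 2, by norm_num⟩ : BeliefI) else ⟨0, by norm_num⟩))) :=
            jointPBin_half_prob _ _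
          exact integrable_of_bdd hindHmeas.measurable.aestronglyMeasurable hindHbd
        · haveI : IsProbabilityMeasure (jointPBin (1 / 2)
              (Measure.dirac (fun i : Fin 2 =>
                if i = 0 then (⟨1 / 2, by norm_num⟩ : BeliefI) else ⟨1, by norm_num⟩))
              (Measure.dirac (fun i : Fin 2 =>
                if i = 0 then (⟨1 / 2, by norm_num⟩ : BeliefI) else ⟨0, by norm_num⟩))) :=
            jointPBin_half_prob _ _
          exact (integrable_of_bdd hxm.aestronglyMeasurable (hxbd' i)).integrableOn
        · obtain ⟨B, hB, rfl⟩ := hs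
          rw [hset _ hxm.stronglyMeasurable (hxbd' i) _ _ _ (hm _ ⟨B, hB, rfl⟩),
            hset _ hindHmeas (hindHbd) _ _ _ (hm _ ⟨B, hB, rfl⟩)]
          fin_cases i <;>
            simp only [Set.mem_preimage, Set.indicator_apply, Set.mem_setOf_eq] <;>
            norm_num [StateL, StateH] <;>
            split_ifs <;>
            first
              | rfl
              | norm_num
              | (exfalso; solve_by_elim)
        · exact (measurable_const.sub
            (measurable_subtype_coe.comp hprojm)).stronglyMeasurable.aestronglyMeasurable
    · -- value
      have hphi_sm : StronglyMeasurable (fun x : Fin 2 → BeliefI => h |(x 0).1 - (x 1).1|) :=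
        (continuous_phi hcont).stronglyMeasurable
      rw [integral_dirac' _ _ hphi_sm, integral_dirac' _ _ hphi_sm]
      have e1 : |(1:ℝ)/2 - 1| = 1/2 := by rw [abs_sub_comm]; norm_num
      have e2 : |(1:ℝ)/2 - 0| = 1/2 := by norm_num
      norm_num [e1, e2, abs_of_nonneg]
      ring
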